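/- The compression of a tree-based rooted phylogenetic network is tree-based: if there is a set E of reticulate edges of N such that (V(N), E(N)∖E) is a tree with the same leaf set as N, then there is a set of reticulate edges of the compression N̄ whose removal yields a spanning tree of N̄ with the same leaf set. -/

import Mathlib

open Relation

variable {V : Type*}

/-- Indegree of a node in a digraph given by an edge relation. -/
noncomputable def indeg (E : V → V → Prop) (v : V) : ℕ := Set.ncard {u | E u v}

/-- Outdegree of a node in a digraph given by an edge relation. -/
noncomputable def outdeg (E : V → V → Prop) (v : V) : ℕ := Set.ncard {w | E v w}

/-- A directed path from `x` to `y` in the digraph `E`, recorded as the list of its nodes. -/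
def IsDirPathE (E : V → V → Prop) (x y : V) (p : List V) : Prop :=
  p.head? = some x ∧ p.getLast? = some y ∧ p.Chain' E

/-- `Dom E root x y`: `x` is a dominator of `y`, i.e. `x` is an ancestor of `y` and every
directed path from `root` to `y` contains `x`. -/
def Dom (E : V → V → Prop) (root x y : V) : Prop :=
  Relation.TransGen E x y ∧ ∀ p, IsDirPathE E root y p → x ∈ p

/-- A rooted phylogenetic network: a rooted acyclic digraph with a unique root of indegree 0
and outdegree ≥ 1, in which every non-root node has indegree 1 or outdegree 1, and every node
is reachable from the root. -/
structure RPN (V : Type*) [Fintype V] where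
  E : V → V → Prop
  root : V
  acyclic : ∀ v, ¬ Relation.TransGen E v v
  root_indeg : indeg E root = 0
  root_outdeg : 1 ≤ outdeg E root
  degree_cond : ∀ v, v ≠ root → indeg E v = 1 ∨ outdeg E v = 1
  reachable : ∀ v, Relation.ReflTransGen E root v

namespace RPN

variable [Fintype V] (N : RPN V)

/-- A leaf: indegree 1 and outdegree 0. -/
def isLeaf (v : V) : Prop := indeg N.E v = 1 ∧ outdeg N.E v = 0

/-- A reticulate node: indegree at least 2. -/
def isRetic (v : V) : Prop := 2 ≤ indeg N.E v

/-- A tree node: the root, or a node of indegree 1 and outdegree at least 2. -/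
def isTreeN (v : V) : Prop := v = N.root ∨ (indeg N.E v = 1 ∧ 2 ≤ outdeg N.E v)

/-- A redundant node: indegree 1 and outdegree 1. -/
def isRedund (v : V) : Prop := indeg N.E v = 1 ∧ outdeg N.E v = 1

/-- A directed path from `x` to `y` in `N`. -/
def IsDirPath (x y : V) (p : List V) : Prop := IsDirPathE N.E x y p

/-- `x` lies on every directed path from the root to `y`. -/
def Dominates (x y : V) : Prop := ∀ p, N.IsDirPath N.root y p → x ∈ p

/-- A node is visible if it lies on every root-to-`ℓ` path for some leaf `ℓ`. -/
def Visible (x : V) : Prop := ∃ ℓ, N.isLeaf ℓ ∧ N.Dominates x ℓ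

/-- Tree-child: every non-leaf node has a child that is a leaf, a tree node, or a redundant
node. -/
def TreeChild : Prop :=
  ∀ u, ¬ N.isLeaf u → ∃ c, N.E u c ∧ (N.isLeaf c ∨ N.isTreeN c ∨ N.isRedund c)

/-- Edge of the subgraph induced by the tree nodes. -/
def treeE (u v : V) : Prop := N.E u v ∧ N.isTreeN u ∧ N.isTreeN v

/-- Undirected adjacency in the subgraph induced by the tree nodes. -/
def treeAdj (u v : V) : Prop := N.isTreeN u ∧ N.isTreeN v ∧ (N.E u v ∨ N.E v u)

/-- The tree-node component of a tree node `u`. -/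
def treeComp (u : V) : Set V := {v | Relation.ReflTransGen N.treeAdj u v}

/-- Edge of the subgraph induced by the reticulate nodes. -/
def reticE (u v : V) : Prop := N.E u v ∧ N.isRetic u ∧ N.isRetic v

/-- Undirected adjacency in the subgraph induced by the reticulate nodes. -/
def reticAdj (u v : V) : Prop := N.isRetic u ∧ N.isRetic v ∧ (N.E u v ∨ N.E v u)

/-- The reticulation component of a reticulate node `u`. -/
def reticComp (u : V) : Set V := {v | Relation.ReflTransGen N.reticAdj u v}

open Classical in
/-- The compression quotient map: each tree node is sent to its tree-node component, each
reticulate node to its reticulation component, and every other node to itself (as a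
singleton set). -/
noncomputable def comp (u : V) : Set V :=
  if N.isTreeN u then N.treeComp u else if N.isRetic u then N.reticComp u else {u}

/-- Edge relation of the compression `N̄`: an edge between the (distinct) images of the
endpoints of each edge of `N`. -/
def compE (A B : Set V) : Prop :=
  A ≠ B ∧ ∃ u v, N.E u v ∧ N.comp u = A ∧ N.comp v = B

/-- `N` is binary: reticulate nodes have indegree exactly 2, tree nodes outdegree exactly 2. -/
def Binary : Prop :=
  (∀ v, N.isRetic v → indeg N.E v = 2) ∧ (∀ v, N.isTreeN v → outdeg N.E v = 2)

/-- `N` is galled: every reticulate node `r` has a tree-node ancestor `w` with two internally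
disjoint directed paths from `w` to `r` in which all nodes except `r` are tree nodes. -/
def Galled : Prop :=
  ∀ r, N.isRetic r → ∃ w p q, N.isTreeN w ∧
    N.IsDirPath w r p ∧ N.IsDirPath w r q ∧ p ≠ q ∧
    (∀ x ∈ p.tail.dropLast, x ∉ q.tail.dropLast) ∧
    (∀ x ∈ p, x ≠ r → N.isTreeN x) ∧ (∀ x ∈ q, x ≠ r → N.isTreeN x)

/-- The spanning subgraph determined by a switching `s` choosing one parent of each
reticulate node. -/
def SpanE (s : V → V) (u v : V) : Prop := N.E u v ∧ (N.isRetic v → u = s v)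

/-- `S` is displayed (as a softwired cluster) at `u`: for some switching, the set of leaves
below `u` in the resulting spanning tree is exactly `S`. -/
def DisplayedAt (S : Set V) (u : V) : Prop :=
  ∃ s : V → V, (∀ v, N.isRetic v → N.E (s v) v) ∧
    {ℓ | N.isLeaf ℓ ∧ Relation.ReflTransGen (N.SpanE s) u ℓ} = S

/-- An isolated reticulate node: neither its parents nor its child are reticulate. -/
def IsolatedRetic (w : V) : Prop :=
  N.isRetic w ∧ (∀ x, N.E x w → ¬ N.isRetic x) ∧ (∀ y, N.E w y → ¬ N.isRetic y)

end RPN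

/-!
Let `T` be the spanning tree of `N` left after removing `Edel`. Every edge into a tree node and
every edge out of a reticulate node lies in `T`, so each tree-node component and each
reticulation component is connected inside `T`. A connected piece of a rooted tree has exactly
one node whose `T`-parent lies outside it, so every non-root node of the compression has exactly
one incoming edge that is the image of an edge of `T`. Deleting all other compression edges
leaves the image of `T`: it reaches everything from the root, and a component without outgoing
image edges contains a node without `T`-children, that is, a leaf.
-/

/-- `P x y` reads "`x` is the parent of `y`". Every node `R`-reachable from `a` is reached from
`a` by descending along `P` inside `A`, and a descent ending at `b` is trivial. -/
theorem eq_of_reflTransGen_of_forall_parent_not_mem {α : Type*} {P R : α → α → Prop}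
    {A : Set α} (hP : ∀ {x x' y}, P x y → P x' y → x = x')
    (hR : ∀ {x y}, x ∈ A → R x y → y ∈ A ∧ (P x y ∨ P y x))
    {a b : α} (ha : a ∈ A) (ha' : ∀ p, P p a → p ∉ A) (hb' : ∀ p, P p b → p ∉ A)
    (hab : ReflTransGen R a b) : a = b := by
  have descend : ∀ c, ReflTransGen R a c →
      c ∈ A ∧ ReflTransGen (fun x y => P x y ∧ x ∈ A) a c := by
    intro c hc
    induction hc with
    | refl => exact ⟨ha, .refl⟩
    | @tail c d _ hcd ih =>
      obtain ⟨hcA, hac⟩ := ih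
      obtain ⟨hdA, hcd | hdc⟩ := hR hcA hcd
      · exact ⟨hdA, hac.tail ⟨hcd, hcA⟩⟩
      · refine ⟨hdA, ?_⟩
        rcases hac.cases_tail with rfl | ⟨e, hae, hec, -⟩
        · exact absurd hdA (ha' d hdc)
        · rwa [hP hec hdc] at hae
  rcases (descend b hab).2.cases_tail with h | ⟨p, -, hpb, hpA⟩
  · exact h.symm
  · exact absurd hpA (hb' p hpb)

theorem reflTransGen_of_reflTransGen_or {α : Type*} {r s : α → α → Prop} {p : α → Prop}
    (hr : ∀ {x y}, r x y → p y) (hs : ∀ {x y}, p x → ¬ s x y) {a b : α} (ha : p a)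
    (hab : ReflTransGen (fun x y => r x y ∨ s x y) a b) : ReflTransGen r a b := by
  suffices p b ∧ ReflTransGen r a b from this.2
  induction hab with
  | refl => exact ⟨ha, .refl⟩
  | tail _ hcd ih =>
    obtain ⟨hc, hac⟩ := ih
    rcases hcd with hcd | hcd
    · exact ⟨hr hcd, hac.tail hcd⟩
    · exact absurd hcd (hs hc)

namespace RPN

variable [Fintype V] (N : RPN V)

lemma not_E_root (u : V) : ¬ N.E u N.root :=
  Set.eq_empty_iff_forall_notMem.mp ((Set.ncard_eq_zero (Set.toFinite _)).mp N.root_indeg) u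

lemma not_E_of_isLeaf {ℓ : V} (h : N.isLeaf ℓ) (w : V) : ¬ N.E ℓ w :=
  Set.eq_empty_iff_forall_notMem.mp ((Set.ncard_eq_zero (Set.toFinite _)).mp h.2) w

lemma not_isRetic_of_isTreeN {v : V} (h : N.isTreeN v) : ¬ N.isRetic v := by
  rcases h with rfl | ⟨h, -⟩ <;> simp [isRetic, N.root_indeg, *]

lemma not_isRetic_of_isLeaf {v : V} (h : N.isLeaf v) : ¬ N.isRetic v := by
  simp [isRetic, h.1]

lemma not_isTreeN_of_isLeaf {v : V} (h : N.isLeaf v) : ¬ N.isTreeN v := by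
  rintro (rfl | ⟨-, h'⟩)
  · simpa [N.root_indeg] using h.1
  · have := h.2; omega

lemma eq_of_E_of_isRetic {v w w' : V} (hv : N.isRetic v) (hw : N.E v w) (hw' : N.E v w') :
    w = w' := by
  have hne : v ≠ N.root := by rintro rfl; simp [isRetic, N.root_indeg] at hv
  have hout : outdeg N.E v = 1 :=
    (N.degree_cond v hne).resolve_left (by unfold isRetic at hv; omega)
  obtain ⟨c, hc⟩ := Set.ncard_eq_one.mp hout
  have hw : w ∈ {w | N.E v w} := hw
  have hw' : w' ∈ {w | N.E v w} := hw'
  rw [hc] at hw hw'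
  exact hw.trans hw'.symm

lemma wellFounded_E : WellFounded N.E :=
  haveI : IsTrans V (TransGen N.E) := ⟨fun _ _ _ => TransGen.trans⟩
  haveI : Std.Irrefl (TransGen N.E) := ⟨N.acyclic⟩
  Subrelation.wf TransGen.single (Finite.wellFounded_of_trans_of_irrefl (TransGen N.E))

lemma wellFounded_flip_E : WellFounded (flip N.E) :=
  haveI : IsTrans V (flip (TransGen N.E)) := ⟨fun _ _ _ h h' => TransGen.trans h' h⟩
  haveI : Std.Irrefl (flip (TransGen N.E)) := ⟨N.acyclic⟩
  Subrelation.wf (r := flip (TransGen N.E)) (fun h => TransGen.single h)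
    (Finite.wellFounded_of_trans_of_irrefl _)

def compAdj (x y : V) : Prop := N.treeAdj x y ∨ N.reticAdj x y

instance : Std.Symm N.compAdj :=
  ⟨fun _ _ => Or.imp (fun h => ⟨h.2.1, h.1, h.2.2.symm⟩)
    (fun h => ⟨h.2.1, h.1, h.2.2.symm⟩)⟩

lemma isTreeN_of_mem_treeComp {u v : V} (hu : N.isTreeN u) (hv : v ∈ N.treeComp u) :
    N.isTreeN v := by
  induction hv with
  | refl => exact hu
  | tail _ h _ => exact h.2.1

lemma comp_eq_setOf_reflTransGen (u : V) : N.comp u = {v | ReflTransGen N.compAdj u v} := by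
  ext v
  unfold comp
  split_ifs with ht hr
  · refine ⟨fun h => ReflTransGen.mono (fun _ _ => Or.inl) _ _ h, ?_⟩
    exact reflTransGen_of_reflTransGen_or (p := N.isTreeN) (fun h => h.2.1)
      (fun hx h => N.not_isRetic_of_isTreeN hx h.1) ht
  · refine ⟨fun h => ReflTransGen.mono (fun _ _ => Or.inr) _ _ h, fun h => ?_⟩
    exact reflTransGen_of_reflTransGen_or (p := N.isRetic) (fun h => h.2.1)
      (fun hx h => N.not_isRetic_of_isTreeN h.1 hx) hr
      (ReflTransGen.mono (fun _ _ => Or.symm) _ _ h)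
  · refine ⟨fun h => h ▸ .refl, fun h => ?_⟩
    rcases h.cases_head with h | ⟨c, hc | hc, -⟩
    · exact h.symm
    · exact absurd hc.1 ht
    · exact absurd hc.1 hr

lemma mem_comp_iff {u v : V} : v ∈ N.comp u ↔ ReflTransGen N.compAdj u v := by
  rw [comp_eq_setOf_reflTransGen]; rfl

lemma mem_comp_self (u : V) : u ∈ N.comp u := N.mem_comp_iff.mpr .refl

lemma comp_eq_comp_of_mem {u v : V} (h : v ∈ N.comp u) : N.comp v = N.comp u := by
  have hvu := Std.Symm.symm _ _ (N.mem_comp_iff.mp h)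
  ext x
  simp only [mem_comp_iff]
  exact ⟨(N.mem_comp_iff.mp h).trans, hvu.trans⟩

lemma isTreeN_of_mem_comp_root {v : V} (h : v ∈ N.comp N.root) : N.isTreeN v := by
  have hroot : N.isTreeN N.root := Or.inl rfl
  rw [comp, if_pos hroot] at h
  exact N.isTreeN_of_mem_treeComp hroot h

lemma comp_of_isLeaf {ℓ : V} (h : N.isLeaf ℓ) : N.comp ℓ = {ℓ} := by
  rw [comp, if_neg (N.not_isTreeN_of_isLeaf h), if_neg (N.not_isRetic_of_isLeaf h)]

def keptE (Edel : Set (V × V)) (a b : V) : Prop := N.E a b ∧ (a, b) ∉ Edel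

def keptCompE (Edel : Set (V × V)) (A B : Set V) : Prop :=
  N.compE A B ∧ ∃ u v, N.keptE Edel u v ∧ N.comp u = A ∧ N.comp v = B

/-- Removing `Edel` from `N` leaves the spanning tree `N.keptE Edel` whose leaves are those of
`N`. -/
structure IsTreeSupport (Edel : Set (V × V)) : Prop where
  isRetic_of_mem : ∀ e ∈ Edel, N.E e.1 e.2 ∧ N.isRetic e.2
  ncard_keptE_parents : ∀ v, v ≠ N.root → Set.ncard {u | N.keptE Edel u v} = 1
  leaves_eq : {v | ∀ w, ¬ N.keptE Edel v w} = {v | N.isLeaf v}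

namespace IsTreeSupport

variable {N} {Edel : Set (V × V)}

lemma keptE_of_not_isRetic (hE : N.IsTreeSupport Edel) {u v : V} (hv : ¬ N.isRetic v)
    (h : N.E u v) : N.keptE Edel u v :=
  ⟨h, fun hm => hv (hE.isRetic_of_mem _ hm).2⟩

lemma exists_keptE_of_not_isLeaf (hE : N.IsTreeSupport Edel) {v : V} (hv : ¬ N.isLeaf v) :
    ∃ w, N.keptE Edel v w := by
  by_contra! h
  have hv' : v ∈ {v | ∀ w, ¬ N.keptE Edel v w} := h
  rw [hE.leaves_eq] at hv'
  exact hv hv'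

lemma keptE_of_isRetic (hE : N.IsTreeSupport Edel) {u w : V} (hu : N.isRetic u)
    (h : N.E u w) : N.keptE Edel u w := by
  obtain ⟨w', hw'⟩ := hE.exists_keptE_of_not_isLeaf fun hl => N.not_isRetic_of_isLeaf hl hu
  rwa [N.eq_of_E_of_isRetic hu h hw'.1]

lemma keptE_or_keptE_of_compAdj (hE : N.IsTreeSupport Edel) {x y : V} (h : N.compAdj x y) :
    N.keptE Edel x y ∨ N.keptE Edel y x := by
  rcases h with ⟨hx, hy, h | h⟩ | ⟨hx, hy, h | h⟩
  · exact .inl (hE.keptE_of_not_isRetic (N.not_isRetic_of_isTreeN hy) h)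
  · exact .inr (hE.keptE_of_not_isRetic (N.not_isRetic_of_isTreeN hx) h)
  · exact .inl (hE.keptE_of_isRetic hx h)
  · exact .inr (hE.keptE_of_isRetic hy h)

lemma exists_keptE_parent (hE : N.IsTreeSupport Edel) {v : V} (hv : v ≠ N.root) :
    ∃ u, N.keptE Edel u v := by
  obtain ⟨u, hu⟩ := Set.ncard_eq_one.mp (hE.ncard_keptE_parents v hv)
  exact ⟨u, (hu ▸ rfl : u ∈ {u | N.keptE Edel u v})⟩

lemma eq_of_keptE (hE : N.IsTreeSupport Edel) {u u' v : V} (h : N.keptE Edel u v)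
    (h' : N.keptE Edel u' v) : u = u' := by
  have hv : v ≠ N.root := by rintro rfl; exact N.not_E_root u h.1
  obtain ⟨a, ha⟩ := Set.ncard_eq_one.mp (hE.ncard_keptE_parents v hv)
  have hu : u ∈ {u | N.keptE Edel u v} := h
  have hu' : u' ∈ {u | N.keptE Edel u v} := h'
  rw [ha] at hu hu'
  exact hu.trans hu'.symm

lemma reflTransGen_keptE_root (hE : N.IsTreeSupport Edel) (v : V) :
    ReflTransGen (N.keptE Edel) N.root v := by
  induction v using N.wellFounded_E.induction with
  | _ v ih =>
    by_cases hv : v = N.root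
    · exact hv ▸ .refl
    · obtain ⟨u, hu⟩ := hE.exists_keptE_parent hv
      exact (ih u hu.1).tail hu

lemma eq_of_mem_comp (hE : N.IsTreeSupport Edel) {w v v' : V} (hv : v ∈ N.comp w)
    (hv' : v' ∈ N.comp w) (hp : ∀ p, N.keptE Edel p v → p ∉ N.comp w)
    (hp' : ∀ p, N.keptE Edel p v' → p ∉ N.comp w) : v = v' := by
  refine eq_of_reflTransGen_of_forall_parent_not_mem (P := N.keptE Edel) (R := N.compAdj)
    hE.eq_of_keptE (fun hx hxy => ?_) hv hp hp'
    ((Std.Symm.symm _ _ (N.mem_comp_iff.mp hv)).trans (N.mem_comp_iff.mp hv'))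
  exact ⟨N.mem_comp_iff.mpr ((N.mem_comp_iff.mp hx).tail hxy), hE.keptE_or_keptE_of_compAdj hxy⟩

lemma forall_keptE_not_mem_comp (hE : N.IsTreeSupport Edel) {u v : V} (h : N.keptE Edel u v)
    (hne : N.comp u ≠ N.comp v) : ∀ p, N.keptE Edel p v → p ∉ N.comp v := by
  intro p hp hpv
  rw [← hE.eq_of_keptE h hp] at hpv
  exact hne (N.comp_eq_comp_of_mem hpv)

/-- An edge entering the root's component would be kept, and its head would be a second node of
that component without kept parent in it. -/
lemma not_compE_comp_root (hE : N.IsTreeSupport Edel) (B : Set V) :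
    ¬ N.compE B (N.comp N.root) := by
  rintro ⟨hne, u, v, huv, rfl, hv⟩
  have hvroot : v ∈ N.comp N.root := hv ▸ N.mem_comp_self v
  have hkept := hE.keptE_of_not_isRetic
    (N.not_isRetic_of_isTreeN (N.isTreeN_of_mem_comp_root hvroot)) huv
  have hv_eq : v = N.root :=
    hE.eq_of_mem_comp hvroot (N.mem_comp_self _)
      (hv ▸ hE.forall_keptE_not_mem_comp hkept (hv ▸ hne))
      fun p hp => (N.not_E_root p hp.1).elim
  exact N.not_E_root u (hv_eq ▸ huv)

lemma exists_keptCompE (hE : N.IsTreeSupport Edel) {A : Set V} (hA : A ∈ Set.range N.comp)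
    (hA' : A ≠ N.comp N.root) : ∃ B, N.keptCompE Edel B A := by
  obtain ⟨a, rfl⟩ := hA
  obtain ⟨m, hm, hmin⟩ := N.wellFounded_E.has_min (N.comp a) ⟨a, N.mem_comp_self a⟩
  have hmA : N.comp m = N.comp a := N.comp_eq_comp_of_mem hm
  obtain ⟨u, hu⟩ := hE.exists_keptE_parent fun h => hA' (h ▸ hmA.symm)
  have huA : u ∉ N.comp a := fun h => hmin u h hu.1
  exact ⟨N.comp u, ⟨fun h => huA (h ▸ N.mem_comp_self u), u, m, hu.1, rfl, hmA⟩,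
    u, m, hu, rfl, hmA⟩

/-- Both edges enter `A` at a node without kept parent in `A`, and there is only one such node. -/
lemma eq_of_keptCompE (hE : N.IsTreeSupport Edel) {A B B' : Set V} (h : N.keptCompE Edel B A)
    (h' : N.keptCompE Edel B' A) : B = B' := by
  obtain ⟨⟨hne, -⟩, u, v, huv, rfl, rfl⟩ := h
  obtain ⟨⟨hne', -⟩, u', v', huv', rfl, hv'⟩ := h'
  rw [← hv'] at hne'
  have hv'v : v' ∈ N.comp v := hv' ▸ N.mem_comp_self v'
  have hvv' : v = v' := by
    refine hE.eq_of_mem_comp (N.mem_comp_self v) hv'v (hE.forall_keptE_not_mem_comp huv hne) ?_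
    rw [← hv']
    exact hE.forall_keptE_not_mem_comp huv' hne'
  subst hvv'
  rw [hE.eq_of_keptE huv huv']

lemma reflTransGen_keptCompE (hE : N.IsTreeSupport Edel) (v : V) :
    ReflTransGen (N.keptCompE Edel) (N.comp N.root) (N.comp v) := by
  refine ReflTransGen.lift' N.comp (fun a b hab => ?_) _ _ (hE.reflTransGen_keptE_root v)
  show ReflTransGen _ (N.comp a) (N.comp b)
  by_cases hne : N.comp a = N.comp b
  · rw [hne]
  · exact .single ⟨⟨hne, a, b, hab.1, rfl, rfl⟩, a, b, hab, rfl, rfl⟩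

/-- A latest node of a component is a leaf or has a kept child outside the component. -/
lemma setOf_forall_not_keptCompE (hE : N.IsTreeSupport Edel) :
    {A | A ∈ Set.range N.comp ∧ ∀ B, ¬ N.keptCompE Edel A B} =
      N.comp '' {v | N.isLeaf v} := by
  ext A
  constructor
  · rintro ⟨⟨a, rfl⟩, hA⟩
    obtain ⟨m, hm, hmax⟩ := N.wellFounded_flip_E.has_min (N.comp a) ⟨a, N.mem_comp_self a⟩
    have hmA : N.comp m = N.comp a := N.comp_eq_comp_of_mem hm
    by_cases hleaf : N.isLeaf m
    · exact ⟨m, hleaf, hmA⟩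
    obtain ⟨w, hw⟩ := hE.exists_keptE_of_not_isLeaf hleaf
    have hwA : w ∉ N.comp a := fun h => hmax w h hw.1
    exact (hA (N.comp w) ⟨⟨fun h => hwA (h ▸ N.mem_comp_self w), m, w, hw.1, hmA, rfl⟩,
      m, w, hw, hmA, rfl⟩).elim
  · rintro ⟨ℓ, hℓ, rfl⟩
    refine ⟨⟨ℓ, rfl⟩, ?_⟩
    rintro B ⟨⟨-, u, v, huv, hu, -⟩, -⟩
    have hu' : u ∈ N.comp ℓ := hu ▸ N.mem_comp_self u
    rw [N.comp_of_isLeaf hℓ, Set.mem_singleton_iff] at hu'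
    exact N.not_E_of_isLeaf hℓ v (hu' ▸ huv)

end IsTreeSupport

end RPN

theorem stmt12_general [Fintype V] (N : RPN V) (Edel : Set (V × V))
    (hre : ∀ e ∈ Edel, N.E e.1 e.2 ∧ N.isRetic e.2)
    (hT : ∀ v, v ≠ N.root → Set.ncard {u | N.E u v ∧ (u, v) ∉ Edel} = 1)
    (hleaf : {v | ∀ w, ¬ (N.E v w ∧ (v, w) ∉ Edel)} = {v | N.isLeaf v}) :
    ∃ Fdel : Set (Set V × Set V),
      (∀ e ∈ Fdel, N.compE e.1 e.2 ∧ 2 ≤ Set.ncard {B | N.compE B e.2}) ∧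
      (∀ A ∈ Set.range N.comp, A ≠ N.comp N.root →
        Set.ncard {B | N.compE B A ∧ (B, A) ∉ Fdel} = 1) ∧
      (∀ A ∈ Set.range N.comp,
        Relation.ReflTransGen (fun X Y => N.compE X Y ∧ (X, Y) ∉ Fdel) (N.comp N.root) A) ∧
      {A | A ∈ Set.range N.comp ∧ ∀ B, ¬ (N.compE A B ∧ (A, B) ∉ Fdel)}
        = N.comp '' {v | N.isLeaf v} := by
  have hE : N.IsTreeSupport Edel := ⟨hre, hT, hleaf⟩
  refine ⟨{e | N.compE e.1 e.2 ∧ ¬ N.keptCompE Edel e.1 e.2}, ?_⟩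
  have hkept : ∀ X Y, (N.compE X Y ∧ ¬ (N.compE X Y ∧ ¬ N.keptCompE Edel X Y)) ↔
      N.keptCompE Edel X Y :=
    fun X Y => ⟨fun ⟨h, hn⟩ => not_not.mp fun hk => hn ⟨h, hk⟩,
      fun h => ⟨h.1, fun hF => hF.2 h⟩⟩
  simp only [Set.mem_ofPred_eq, hkept]
  refine ⟨?_, ?_, ?_, hE.setOf_forall_not_keptCompE⟩
  · rintro ⟨B, A⟩ ⟨hBA, hnk⟩
    have hA : A ∈ Set.range N.comp := by
      obtain ⟨-, u, v, -, -, hv⟩ := hBA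
      exact ⟨v, hv⟩
    obtain ⟨B₀, hB₀⟩ := hE.exists_keptCompE hA fun h => hE.not_compE_comp_root B (h ▸ hBA)
    refine ⟨hBA, ?_⟩
    calc 2 = ({B, B₀} : Set (Set V)).ncard :=
          (Set.ncard_pair (by rintro rfl; exact hnk hB₀)).symm
      _ ≤ _ := Set.ncard_le_ncard (Set.pair_subset hBA hB₀.1)
  · intro A hA hA'
    obtain ⟨B, hB⟩ := hE.exists_keptCompE hA hA'
    exact Set.ncard_eq_one.mpr
      ⟨B, Set.eq_singleton_iff_unique_mem.mpr ⟨hB, fun B' hB' => hE.eq_of_keptCompE hB' hB⟩⟩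
  · rintro _ ⟨v, rfl⟩
    exact hE.reflTransGen_keptCompE v

/-- The compression of a tree-based network is tree-based: if removing a set
`Edel` of reticulate edges of `N` yields a spanning tree with the same leaf set as `N`, then
some set `Fdel` of reticulate edges of the compression can be removed to yield a spanning
tree of the compression with the same leaf set. -/
theorem stmt12 [Fintype V] (N : RPN V) (Edel : Set (V × V))
    (hre : ∀ e ∈ Edel, N.E e.1 e.2 ∧ N.isRetic e.2)
    (hT : ∀ v, v ≠ N.root → Set.ncard {u | N.E u v ∧ (u, v) ∉ Edel} = 1)
    (hreach : ∀ v, Relation.ReflTransGen (fun a b => N.E a b ∧ (a, b) ∉ Edel) N.root v)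
    (hleaf : {v | ∀ w, ¬ (N.E v w ∧ (v, w) ∉ Edel)} = {v | N.isLeaf v}) :
    ∃ Fdel : Set (Set V × Set V),
      (∀ e ∈ Fdel, N.compE e.1 e.2 ∧ 2 ≤ Set.ncard {B | N.compE B e.2}) ∧
      (∀ A ∈ Set.range N.comp, A ≠ N.comp N.root →
        Set.ncard {B | N.compE B A ∧ (B, A) ∉ Fdel} = 1) ∧
      (∀ A ∈ Set.range N.comp,
        Relation.ReflTransGen (fun X Y => N.compE X Y ∧ (X, Y) ∉ Fdel) (N.comp N.root) A) ∧
      {A | A ∈ Set.range N.comp ∧ ∀ B, ¬ (N.compE A B ∧ (A, B) ∉ Fdel)}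
        = N.comp '' {v | N.isLeaf v} :=
  stmt12_general N Edel hre hT hleaf
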